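/- Let k be an algebraically closed field of characteristic ∉ {2,3,5}. Let R be a k-subalgebra of k[[t]] with 1 ∈ R, t^4·k[[t]] ⊆ R, and dim_k(k[[t]]/R) = 2. Then exactly one of the following holds: (a) R = k ⊕ t^3·k[[t]] (the non-Gorenstein genus-two cusp k[[t^3,t^4,t^5]]), or (b) there exists a continuous k-algebra automorphism φ of k[[t]] such that φ(R) = k ⊕ k·t^2 ⊕ t^4·k[[t]] = k[[t^2,t^5]] (the ramphoid cusp). In particular there are exactly two unibranch curve singularities of genus two up to isomorphism, and only the ramphoid cusp among them is Gorenstein. -/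

import Mathlib

/-!
Since `R` contains `k` and `t⁴k[[t]]`, the kernel of `f ↦ (f₁, f₂, f₃)`, it is the preimage of
a subspace `W ⊆ k³`, and colength two makes `W` a line. A generator `(a, b, c)` with `a ≠ 0` is
impossible: the square of `at + bt² + ct³` lies in `R`, yet its image `(0, a², 2ab)` is not on
the line. Hence `R = {f | f₁ = 0, c f₂ = b f₃}`. For `b = 0` this is `k ⊕ t³k[[t]]`, whose
images under substitutions still have vanishing `t²`-coefficient, so none is `k[[t², t⁵]]`.
For `b ≠ 0` the substitution `t ↦ t - (c / 2b) t²` changes `f₃` into `f₃ - (c / b) f₂` and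
so carries `R` onto `k[[t², t⁵]]`; being unitriangular on coefficients, it is surjective.
-/

open PowerSeries

variable (k : Type*) [Field k]

/-- Substitution `g ↦ g(u)` for a power series `u` with zero constant term. -/
noncomputable def subst (u g : PowerSeries k) : PowerSeries k :=
  PowerSeries.mk fun m =>
    coeff m (∑ n ∈ Finset.range (m + 1), coeff n g • u ^ n)

variable {k}

theorem coeff_subst_eq_sum (u g : k⟦X⟧) (m : ℕ) :
    coeff m (subst k u g) = ∑ n ∈ Finset.range (m + 1), coeff n g * coeff m (u ^ n) := by
  simp [_root_.subst, map_sum, smul_eq_C_mul, coeff_C_mul]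

theorem coeff_pow_self_of_coeff_zero_eq_zero {u : k⟦X⟧} (hu0 : coeff 0 u = 0) (m : ℕ) :
    coeff m (u ^ m) = coeff 1 u ^ m := by
  obtain ⟨w, rfl⟩ : X ∣ u := X_dvd_iff.2 (by simpa using hu0)
  simpa [mul_pow] using coeff_X_pow_mul (w ^ m) m 0

noncomputable def substPreimageCoeff (u f : k⟦X⟧) (m : ℕ) : k :=
  (coeff m f - ∑ n : Fin m, substPreimageCoeff u f n * coeff m (u ^ (n : ℕ))) / coeff 1 u ^ m

theorem subst_surjective {u : k⟦X⟧} (hu0 : coeff 0 u = 0) (hu1 : coeff 1 u ≠ 0) :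
    Function.Surjective (subst k u) := by
  intro f
  refine ⟨mk (substPreimageCoeff u f), ?_⟩
  ext m
  rw [coeff_subst_eq_sum, Finset.sum_range_succ, coeff_pow_self_of_coeff_zero_eq_zero hu0]
  simp only [coeff_mk]
  rw [substPreimageCoeff,
    Fin.sum_univ_eq_sum_range (fun n => substPreimageCoeff u f n * coeff m (u ^ n))]
  field_simp
  ring

theorem coeff_two_subst_eq_zero (u : k⟦X⟧) {g : k⟦X⟧} (hg1 : coeff 1 g = 0)
    (hg2 : coeff 2 g = 0) : coeff 2 (subst k u g) = 0 := by
  simp [coeff_subst_eq_sum, Finset.sum_range_succ, hg1, hg2, coeff_one]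

theorem image_subst_setOf_coeff_two_eq_zero_ne (u : k⟦X⟧) :
    subst k u '' {g | coeff 1 g = 0 ∧ coeff 2 g = 0} ≠ {f | coeff 1 f = 0 ∧ coeff 3 f = 0} := by
  intro h
  obtain ⟨g, ⟨hg1, hg2⟩, hgX⟩ : X ^ 2 ∈ subst k u '' {g | coeff 1 g = 0 ∧ coeff 2 g = 0} := by
    rw [h]; simp [coeff_X_pow]
  simpa [hgX] using coeff_two_subst_eq_zero u hg1 hg2

section Reparametrization

variable (e : k) (g : k⟦X⟧)

theorem coeff_one_subst_X_add_C_mul_X_sq :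
    coeff 1 (subst k (X + C e * X ^ 2) g) = coeff 1 g := by
  simp [coeff_subst_eq_sum, Finset.sum_range_succ, coeff_one, coeff_X, coeff_C_mul, coeff_X_pow]

theorem coeff_three_subst_X_add_C_mul_X_sq :
    coeff 3 (subst k (X + C e * X ^ 2) g) = 2 * e * coeff 2 g + coeff 3 g := by
  have hsq : (X + C e * X ^ 2 : k⟦X⟧) ^ 2 = X ^ 2 + C (2 * e) * X ^ 3 + C (e ^ 2) * X ^ 4 := by
    simp only [map_mul, map_pow, map_ofNat]; ring
  have hcube : (X + C e * X ^ 2 : k⟦X⟧) ^ 3 =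
      X ^ 3 + C (3 * e) * X ^ 4 + C (3 * e ^ 2) * X ^ 5 + C (e ^ 3) * X ^ 6 := by
    simp only [map_mul, map_pow, map_ofNat]; ring
  simp [coeff_subst_eq_sum, Finset.sum_range_succ, hsq, hcube, coeff_one, coeff_X, coeff_C_mul,
    coeff_X_pow, -map_mul, -map_pow]
  ring

theorem image_subst_X_add_C_mul_X_sq {b c : k} (h2 : (2 : k) ≠ 0) (hb : b ≠ 0) :
    subst k (X + C (-(c / (2 * b))) * X ^ 2) ''
        {g | coeff 1 g = 0 ∧ c * coeff 2 g = b * coeff 3 g} =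
      {f | coeff 1 f = 0 ∧ coeff 3 f = 0} := by
  ext f
  constructor
  · rintro ⟨g, ⟨hg1, hg⟩, rfl⟩
    rw [Set.mem_ofPred_eq, coeff_one_subst_X_add_C_mul_X_sq, coeff_three_subst_X_add_C_mul_X_sq]
    refine ⟨hg1, ?_⟩
    field_simp
    linear_combination -hg
  · rintro ⟨hf1, hf3⟩
    obtain ⟨g, rfl⟩ := subst_surjective (u := X + C (-(c / (2 * b))) * X ^ 2)
      (by simp) (by simp [coeff_X_pow]) f
    rw [coeff_one_subst_X_add_C_mul_X_sq] at hf1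
    rw [coeff_three_subst_X_add_C_mul_X_sq] at hf3
    refine ⟨g, ⟨hf1, ?_⟩, rfl⟩
    field_simp at hf3
    linear_combination -hf3

end Reparametrization

theorem Submodule.finrank_quotient_map_of_surjective {K M N : Type*} [Field K] [AddCommGroup M]
    [Module K M] [AddCommGroup N] [Module K N] {f : M →ₗ[K] N} (hf : Function.Surjective f)
    {p : Submodule K M} (hp : LinearMap.ker f ≤ p) :
    Module.finrank K (M ⧸ p) = Module.finrank K (N ⧸ p.map f) := by
  let g := (p.map f).mkQ ∘ₗ f
  have hker : LinearMap.ker g = p := by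
    rw [LinearMap.ker_comp, Submodule.ker_mkQ, Submodule.comap_map_eq, sup_eq_left.2 hp]
  have hg : Function.Surjective g := (p.map f).mkQ_surjective.comp hf
  exact ((Submodule.quotEquivOfEq _ _ hker.symm).trans (g.quotKerEquivOfSurjective hg)).finrank_eq

theorem Submodule.mem_span_singleton_zero_prod_iff {K : Type*} [Field K] {b c : K}
    (hbc : (b, c) ≠ 0) (x : K × K × K) :
    x ∈ K ∙ (0, b, c) ↔ x.1 = 0 ∧ c * x.2.1 = b * x.2.2 := by
  obtain ⟨x₁, x₂, x₃⟩ := x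
  simp only [Submodule.mem_span_singleton, Prod.smul_mk, smul_eq_mul, mul_zero, Prod.mk.injEq]
  constructor
  · rintro ⟨μ, rfl, rfl, rfl⟩
    exact ⟨rfl, by ring⟩
  · rintro ⟨rfl, hx⟩
    by_cases hb : b = 0
    · have hc : c ≠ 0 := fun hc => hbc (by simp [hb, hc])
      refine ⟨x₃ / c, rfl, ?_, by field_simp⟩
      simp only [hb, zero_mul, mul_eq_zero, hc, false_or] at hx
      simp [hb, hx]
    · refine ⟨x₂ / b, rfl, by field_simp, ?_⟩
      field_simp
      linear_combination hx

noncomputable def coeffOneToThree : k⟦X⟧ →ₗ[k] k × k × k :=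
  (coeff 1).prod ((coeff 2).prod (coeff 3))

theorem coeffOneToThree_apply (f : k⟦X⟧) :
    coeffOneToThree f = (coeff 1 f, coeff 2 f, coeff 3 f) := rfl

theorem coeffOneToThree_cubic (a b c : k) :
    coeffOneToThree (C a * X + C b * X ^ 2 + C c * X ^ 3) = (a, b, c) := by
  simp [coeffOneToThree_apply, coeff_X_pow, coeff_C_mul]

theorem coeffOneToThree_cubic_sq (a b c : k) :
    coeffOneToThree ((C a * X + C b * X ^ 2 + C c * X ^ 3) ^ 2) = (0, a ^ 2, 2 * a * b) := by
  have h : (C a * X + C b * X ^ 2 + C c * X ^ 3 : k⟦X⟧) ^ 2 =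
      C (a ^ 2) * X ^ 2 + C (2 * a * b) * X ^ 3 + X ^ 4 * (C (b ^ 2 + 2 * a * c) +
        C (2 * b * c) * X + C (c ^ 2) * X ^ 2) := by
    simp only [map_add, map_mul, map_pow, map_ofNat]; ring
  rw [h, coeffOneToThree_apply]
  simp [coeff_X_pow, coeff_C_mul, coeff_X_pow_mul', -map_mul, -map_pow]

theorem coeffOneToThree_surjective : Function.Surjective (coeffOneToThree (k := k)) :=
  fun ⟨a, b, c⟩ => ⟨_, coeffOneToThree_cubic a b c⟩

section Subalgebra

variable (R : Subalgebra k k⟦X⟧)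

theorem ker_coeffOneToThree_le (hR4 : ∀ f : k⟦X⟧, X ^ 4 * f ∈ R) :
    LinearMap.ker coeffOneToThree ≤ Subalgebra.toSubmodule R := by
  intro f hf
  simp only [LinearMap.mem_ker, coeffOneToThree_apply, Prod.mk_eq_zero] at hf
  obtain ⟨g, hg⟩ : X ^ 4 ∣ f - C (coeff 0 f) := by
    rw [X_pow_dvd_iff]
    intro m hm
    interval_cases m <;> simp [hf]
  rw [sub_eq_iff_eq_add] at hg
  rw [Subalgebra.mem_toSubmodule, hg]
  exact R.add_mem (hR4 g) (R.algebraMap_mem (coeff 0 f))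

theorem mem_iff_coeffOneToThree_mem (hR4 : ∀ f : k⟦X⟧, X ^ 4 * f ∈ R) (f : k⟦X⟧) :
    f ∈ R ↔ coeffOneToThree f ∈ (Subalgebra.toSubmodule R).map coeffOneToThree := by
  rw [← Submodule.mem_comap, Submodule.comap_map_eq, sup_eq_left.2 (ker_coeffOneToThree_le R hR4),
    Subalgebra.mem_toSubmodule]

theorem finrank_map_coeffOneToThree (hR4 : ∀ f : k⟦X⟧, X ^ 4 * f ∈ R)
    (hdim : Module.finrank k (k⟦X⟧ ⧸ Subalgebra.toSubmodule R) = 2) :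
    Module.finrank k ((Subalgebra.toSubmodule R).map coeffOneToThree) = 1 := by
  have h := Submodule.finrank_quotient_add_finrank ((Subalgebra.toSubmodule R).map coeffOneToThree)
  rw [← Submodule.finrank_quotient_map_of_surjective coeffOneToThree_surjective
    (ker_coeffOneToThree_le R hR4), hdim] at h
  simp at h
  omega

theorem coeff_one_eq_zero_of_mem (hR4 : ∀ f : k⟦X⟧, X ^ 4 * f ∈ R)
    (hdim : Module.finrank k (k⟦X⟧ ⧸ Subalgebra.toSubmodule R) = 2) {f : k⟦X⟧} (hf : f ∈ R) :
    coeff 1 f = 0 := by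
  set v : k⟦X⟧ := C (coeff 1 f) * X + C (coeff 2 f) * X ^ 2 + C (coeff 3 f) * X ^ 3
  have hvR : v ∈ R := by
    rw [mem_iff_coeffOneToThree_mem R hR4, coeffOneToThree_cubic]
    exact Submodule.mem_map_of_mem hf
  by_contra h1
  have hW : (Subalgebra.toSubmodule R).map coeffOneToThree = k ∙ coeffOneToThree f :=
    eq_span_singleton_of_mem_of_finrank_eq_one (finrank_map_coeffOneToThree R hR4 hdim)
      (Submodule.mem_map_of_mem hf) (by simp [coeffOneToThree_apply, h1])
  have hsq := (mem_iff_coeffOneToThree_mem R hR4 _).1 (R.pow_mem hvR 2)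
  rw [coeffOneToThree_cubic_sq, hW, Submodule.mem_span_singleton] at hsq
  obtain ⟨μ, hμ⟩ := hsq
  simp only [coeffOneToThree_apply, Prod.smul_mk, smul_eq_mul, Prod.mk.injEq] at hμ
  obtain ⟨hμ1, hμ2, -⟩ := hμ
  have hμ0 : μ = 0 := (mul_eq_zero.1 hμ1).resolve_right h1
  exact h1 (pow_eq_zero_iff two_ne_zero |>.1 (by simpa [hμ0] using hμ2.symm))

theorem exists_mem_iff_of_finrank_quotient_eq_two (hR4 : ∀ f : k⟦X⟧, X ^ 4 * f ∈ R)
    (hdim : Module.finrank k (k⟦X⟧ ⧸ Subalgebra.toSubmodule R) = 2) :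
    ∃ b c : k, (b, c) ≠ 0 ∧ ∀ f, f ∈ R ↔ coeff 1 f = 0 ∧ c * coeff 2 f = b * coeff 3 f := by
  have hW1 := finrank_map_coeffOneToThree R hR4 hdim
  obtain ⟨w, hwW, hw0⟩ := Submodule.exists_mem_ne_zero_of_ne_bot
    (p := (Subalgebra.toSubmodule R).map coeffOneToThree) fun h => by
      rw [h, finrank_bot] at hW1; exact zero_ne_one hW1
  obtain ⟨g, hg, rfl⟩ := Submodule.mem_map.1 hwW
  have hw : coeffOneToThree g = (0, coeff 2 g, coeff 3 g) := by
    rw [coeffOneToThree_apply, coeff_one_eq_zero_of_mem R hR4 hdim hg]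
  have hbc : (coeff 2 g, coeff 3 g) ≠ 0 := fun h => hw0 (by simp_all)
  refine ⟨coeff 2 g, coeff 3 g, hbc, fun f => ?_⟩
  rw [mem_iff_coeffOneToThree_mem R hR4, eq_span_singleton_of_mem_of_finrank_eq_one hW1 hwW hw0,
    hw, Submodule.mem_span_singleton_zero_prod_iff hbc]
  rfl

end Subalgebra

theorem stmt_16_general (h2 : (2 : k) ≠ 0)
    (R : Subalgebra k (PowerSeries k))
    (hR4 : ∀ f : PowerSeries k, X ^ 4 * f ∈ R)
    (hdim : Module.finrank k (PowerSeries k ⧸ Subalgebra.toSubmodule R) = 2) :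
    Xor'
      ((R : Set (PowerSeries k)) =
        {f : PowerSeries k | coeff 1 f = 0 ∧ coeff 2 f = 0})
      (∃ u : PowerSeries k, coeff 0 u = 0 ∧ IsUnit (coeff 1 u) ∧
        (fun g => subst k u g) '' (R : Set (PowerSeries k)) =
          {f : PowerSeries k | coeff 1 f = 0 ∧ coeff 3 f = 0}) := by
  obtain ⟨b, c, hbc, hR⟩ := exists_mem_iff_of_finrank_quotient_eq_two R hR4 hdim
  have hRset : (R : Set k⟦X⟧) = {g | coeff 1 g = 0 ∧ c * coeff 2 g = b * coeff 3 g} := Set.ext hR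
  by_cases hb : b = 0
  · have hc : c ≠ 0 := fun hc => hbc (by simp [hb, hc])
    have hcusp : (R : Set k⟦X⟧) = {f | coeff 1 f = 0 ∧ coeff 2 f = 0} := by
      simp [hRset, hb, hc]
    refine Or.inl ⟨hcusp, fun ⟨u, _, _, hu⟩ => ?_⟩
    exact image_subst_setOf_coeff_two_eq_zero_ne u (hcusp ▸ hu)
  · refine Or.inr ⟨⟨X + C (-(c / (2 * b))) * X ^ 2, by simp, by simp [coeff_X_pow], ?_⟩, ?_⟩
    · rw [hRset]
      exact image_subst_X_add_C_mul_X_sq h2 hb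
    · intro hcusp
      have hmem : C b * X ^ 2 + C c * X ^ 3 ∈ (R : Set k⟦X⟧) :=
        (hR _).2 (by simp [coeff_X_pow, mul_comm])
      rw [hcusp] at hmem
      exact hb (by simpa [coeff_X_pow] using hmem.2)

/-- over an algebraically closed field of characteristic ∉ {2,3,5},
a subalgebra `R ⊆ k[[t]]` with `t⁴·k[[t]] ⊆ R` and `dim_k(k[[t]]/R) = 2` is
either the non-Gorenstein cusp `k ⊕ t³k[[t]] = k[[t³,t⁴,t⁵]]`, or is carried by a
continuous automorphism of `k[[t]]` onto the ramphoid cusp `k[[t²,t⁵]]` —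
and exactly one of the two alternatives holds. -/
theorem stmt_16 [IsAlgClosed k] (h2 : (2 : k) ≠ 0) (h3 : (3 : k) ≠ 0) (h5 : (5 : k) ≠ 0)
    (R : Subalgebra k (PowerSeries k))
    (hR4 : ∀ f : PowerSeries k, X ^ 4 * f ∈ R)
    (hdim : Module.finrank k (PowerSeries k ⧸ Subalgebra.toSubmodule R) = 2) :
    Xor'
      ((R : Set (PowerSeries k)) =
        {f : PowerSeries k | coeff 1 f = 0 ∧ coeff 2 f = 0})
      (∃ u : PowerSeries k, coeff 0 u = 0 ∧ IsUnit (coeff 1 u) ∧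
        (fun g => subst k u g) '' (R : Set (PowerSeries k)) =
          {f : PowerSeries k | coeff 1 f = 0 ∧ coeff 3 f = 0}) :=
  stmt_16_general h2 R hR4 hdim
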